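/- Let (X,μ) be a non-atomic probability space, T a tree on X, and M_T the associated dyadic maximal operator. Let g : (0,1] → [0,∞) be non-increasing and integrable with f = ∫₀¹ g(u) du, and let φ : X → [0,∞) be measurable with decreasing rearrangement φ* = g. Then for every λ > f, |{t ∈ (0,1] : (M_T φ)*(t) ≥ λ}| ≤ |{t ∈ (0,1] : (1/t) ∫₀^t g(u) du ≥ λ}|, where (M_T φ)* denotes the decreasing rearrangement of M_T φ and |·| denotes Lebesgue measure. -/

import Mathlib

open MeasureTheory Set
open scoped ENNReal NNReal

/-- The generations of a tree determined by the child map `C`. -/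
def treeGen {X : Type*} (C : Set X → Set (Set X)) : ℕ → Set (Set X)
  | 0 => {Set.univ}
  | (m+1) => ⋃ I ∈ treeGen C m, C I

/-- `T` is a tree on the probability space `(X, μ)` with child map `C`. -/
structure IsTree {X : Type*} [MeasurableSpace X] (μ : Measure X)
    (T : Set (Set X)) (C : Set X → Set (Set X)) : Prop where
  univ_mem : Set.univ ∈ T
  measurableSet : ∀ I ∈ T, MeasurableSet I
  pos : ∀ I ∈ T, 0 < μ I
  child_sub_tree : ∀ I ∈ T, C I ⊆ T
  child_countable : ∀ I ∈ T, (C I).Countable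
  child_nontriv : ∀ I ∈ T, ∃ J ∈ C I, ∃ K ∈ C I, J ≠ K
  child_subset : ∀ I ∈ T, ∀ J ∈ C I, J ⊆ I
  child_disjoint : ∀ I ∈ T, ∀ J ∈ C I, ∀ K ∈ C I, J ≠ K → Disjoint J K
  child_cover : ∀ I ∈ T, I = ⋃₀ C I
  eq_gen : T = ⋃ m, treeGen C m
  gen_small : Filter.Tendsto (fun m => ⨆ I ∈ treeGen C m, μ I) Filter.atTop (nhds 0)

/-- The dyadic maximal operator associated to the tree `T`. -/
noncomputable def maxT {X : Type*} [MeasurableSpace X] (μ : Measure X)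
    (T : Set (Set X)) (φ : X → ℝ) (x : X) : ℝ :=
  sSup {r : ℝ | ∃ I ∈ T, x ∈ I ∧ r = (∫ u in I, |φ u| ∂μ) / (μ I).toReal}

/-- `φ : X → ℝ` has decreasing rearrangement `g : (0,1] → ℝ`. -/
def HasRearrangement {X : Type*} [MeasurableSpace X] (μ : Measure X)
    (φ : X → ℝ) (g : ℝ → ℝ) : Prop :=
  ∀ l : ℝ, 0 ≤ l → μ {x | l < φ x} = volume {t ∈ Set.Ioc (0:ℝ) 1 | l < g t}

/-- `H_p(z) = -(p-1) z^p + p z^{p-1}`. -/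
noncomputable def Hfun (p z : ℝ) : ℝ := -(p-1) * z ^ p + p * z ^ (p-1)

/-- `ω_p`, the inverse function of `H_p : [1, p/(p-1)] → [0,1]`. -/
noncomputable def omegaFun (p b : ℝ) : ℝ :=
  sSup {z : ℝ | z ∈ Set.Icc 1 (p/(p-1)) ∧ Hfun p z = b}

/-- The decreasing rearrangement `ψ*(t) = sup_{e ⊆ X, μ(e) = t} inf_{x ∈ e} ψ(x)`. -/
noncomputable def decRearr {X : Type*} [MeasurableSpace X] (μ : Measure X)
    (ψ : X → ℝ) (t : ℝ) : ℝ :=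
  sSup {r : ℝ | ∃ e : Set X, μ e = ENNReal.ofReal t ∧ r = sInf (ψ '' e)}

/-! Fix `t` with `l ≤ (M_T φ)*(t)` and suppose the running average `A = (1/t) ∫₀ᵗ g` is `< l`;
pick `A < λ < l`. A set `e` of measure `t` lies in `{M_T φ > λ}`, which is the union `U` of the
tree sets on which `φ` averages more than `λ`. The maximal such sets are pairwise disjoint, so
`λ μ(U) ≤ ∫_U φ`; the Hardy–Littlewood inequality gives `∫_U φ ≤ ∫₀^{μ(U)} g`, and since `g`
decreases and `μ(U) ≥ t`, this is at most `μ(U) A < λ μ(U)`. -/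

namespace IsTree

variable {X : Type*} [MeasurableSpace X] {μ : Measure X} {T : Set (Set X)}
  {C : Set X → Set (Set X)}

theorem treeGen_subset (hT : IsTree μ T C) (m : ℕ) : treeGen C m ⊆ T :=
  fun _ hI => hT.eq_gen ▸ mem_iUnion_of_mem m hI

theorem countable (hT : IsTree μ T C) : T.Countable := by
  have hgen : ∀ m, (treeGen C m).Countable := by
    intro m
    induction m with
    | zero => exact countable_singleton _
    | succ m ih =>
      exact ih.biUnion fun I hI => hT.child_countable I (hT.treeGen_subset m hI)
  rw [hT.eq_gen]
  exact countable_iUnion hgen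

theorem eq_or_disjoint_of_mem_treeGen (hT : IsTree μ T C) {m : ℕ} {I J : Set X}
    (hI : I ∈ treeGen C m) (hJ : J ∈ treeGen C m) : I = J ∨ Disjoint I J := by
  induction m generalizing I J with
  | zero => exact Or.inl (hI.trans hJ.symm)
  | succ m ih =>
    obtain ⟨I', hI', hII'⟩ := mem_iUnion₂.1 hI
    obtain ⟨J', hJ', hJJ'⟩ := mem_iUnion₂.1 hJ
    have hI'T := hT.treeGen_subset m hI'
    rcases ih hI' hJ' with rfl | hdisj
    · by_cases hIJ : I = J
      · exact Or.inl hIJ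
      · exact Or.inr (hT.child_disjoint I' hI'T I hII' J hJJ' hIJ)
    · exact Or.inr (hdisj.mono (hT.child_subset I' hI'T I hII')
        (hT.child_subset J' (hT.treeGen_subset m hJ') J hJJ'))

theorem exists_treeGen_superset (hT : IsTree μ T C) {m n : ℕ} (hmn : m ≤ n) {J : Set X}
    (hJ : J ∈ treeGen C n) : ∃ I ∈ treeGen C m, J ⊆ I := by
  induction n, hmn using Nat.le_induction generalizing J with
  | base => exact ⟨J, hJ, subset_rfl⟩
  | succ n _ ih =>
    obtain ⟨K, hK, hJK⟩ := mem_iUnion₂.1 hJ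
    obtain ⟨I, hI, hKI⟩ := ih hK
    exact ⟨I, hI, (hT.child_subset K (hT.treeGen_subset n hK) J hJK).trans hKI⟩

theorem subset_or_subset_or_disjoint (hT : IsTree μ T C) {I J : Set X} (hI : I ∈ T)
    (hJ : J ∈ T) : I ⊆ J ∨ J ⊆ I ∨ Disjoint I J := by
  rw [hT.eq_gen, mem_iUnion] at hI hJ
  obtain ⟨m, hIm⟩ := hI
  obtain ⟨n, hJn⟩ := hJ
  rcases le_total m n with h | h
  · obtain ⟨A, hA, hJA⟩ := hT.exists_treeGen_superset h hJn
    rcases hT.eq_or_disjoint_of_mem_treeGen hIm hA with rfl | hdisj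
    · exact Or.inr (Or.inl hJA)
    · exact Or.inr (Or.inr (hdisj.mono_right hJA))
  · obtain ⟨A, hA, hIA⟩ := hT.exists_treeGen_superset h hIm
    rcases hT.eq_or_disjoint_of_mem_treeGen hJn hA with rfl | hdisj
    · exact Or.inl hIA
    · exact Or.inr (Or.inr (hdisj.mono_right hIA).symm)

/-- The maximal element is the ancestor of `I` in `F` of least generation. -/
theorem exists_maximal_superset (hT : IsTree μ T C) {F : Set (Set X)} (hFT : F ⊆ T)
    {I : Set X} (hI : I ∈ F) : ∃ J, I ⊆ J ∧ Maximal (· ∈ F) J := by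
  classical
  have hex : ∃ n, ∃ J ∈ treeGen C n, J ∈ F ∧ I ⊆ J := by
    obtain ⟨m, hm⟩ := mem_iUnion.1 (hT.eq_gen ▸ hFT hI)
    exact ⟨m, I, hm, hI, subset_rfl⟩
  obtain ⟨J, hJgen, hJF, hIJ⟩ := Nat.find_spec hex
  refine ⟨J, hIJ, hJF, fun K hKF hJK => ?_⟩
  obtain ⟨n, hKn⟩ := mem_iUnion.1 (hT.eq_gen ▸ hFT hKF)
  have hle : Nat.find hex ≤ n := Nat.find_min' hex ⟨K, hKn, hKF, hIJ.trans hJK⟩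
  obtain ⟨A, hA, hKA⟩ := hT.exists_treeGen_superset hle hKn
  obtain ⟨x, hx⟩ := nonempty_of_measure_ne_zero (hT.pos J (hFT hJF)).ne'
  rcases hT.eq_or_disjoint_of_mem_treeGen hJgen hA with rfl | hdisj
  · exact hKA
  · exact absurd (hKA (hJK hx)) (disjoint_left.1 hdisj hx)

theorem sUnion_maximal_eq (hT : IsTree μ T C) {F : Set (Set X)} (hFT : F ⊆ T) :
    ⋃₀ {J | Maximal (· ∈ F) J} = ⋃₀ F := by
  refine subset_antisymm (sUnion_subset_sUnion fun J hJ => hJ.prop) fun x ⟨I, hI, hxI⟩ => ?_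
  obtain ⟨J, hIJ, hJ⟩ := hT.exists_maximal_superset hFT hI
  exact ⟨J, hJ, hIJ hxI⟩

theorem pairwiseDisjoint_maximal (hT : IsTree μ T C) {F : Set (Set X)} (hFT : F ⊆ T) :
    {J | Maximal (· ∈ F) J}.PairwiseDisjoint id := by
  intro I hI J hJ hIJ
  rcases hT.subset_or_subset_or_disjoint (hFT hI.prop) (hFT hJ.prop) with h | h | h
  · exact absurd (subset_antisymm h (hI.2 hJ.prop h)) hIJ
  · exact absurd (subset_antisymm (hJ.2 hI.prop h) h) hIJ
  · exact h

end IsTree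

section WeakType

variable {X : Type*} [MeasurableSpace X] {μ : Measure X} [IsFiniteMeasure μ] {ψ : X → ℝ}
  {lam : ℝ}

theorem mul_measureReal_sUnion_le_setIntegral_of_pairwiseDisjoint {G : Set (Set X)}
    (hGc : G.Countable) (hGd : G.PairwiseDisjoint id) (hGm : ∀ I ∈ G, MeasurableSet I)
    (hψ : Integrable ψ μ) (hG : ∀ I ∈ G, lam * μ.real I ≤ ∫ x in I, ψ x ∂μ) :
    lam * μ.real (⋃₀ G) ≤ ∫ x in ⋃₀ G, ψ x ∂μ := by
  have : Countable G := hGc.to_subtype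
  have hsub : ∀ I : Set X, ∫ x in I, (ψ x - lam) ∂μ = ∫ x in I, ψ x ∂μ - lam * μ.real I :=
    fun I => by
      rw [integral_sub hψ.integrableOn (integrable_const lam), setIntegral_const, smul_eq_mul,
        mul_comm]
  have hnonneg : 0 ≤ ∫ x in ⋃₀ G, (ψ x - lam) ∂μ := by
    rw [sUnion_eq_iUnion]
    refine (hasSum_integral_iUnion (f := fun x => ψ x - lam) (s := fun I : G => (I : Set X))
      (fun I => hGm I I.2)
      (fun I J hIJ => hGd I.2 J.2 (Subtype.coe_injective.ne hIJ))
      (hψ.sub (integrable_const lam)).integrableOn).nonneg fun I => ?_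
    rw [hsub]
    exact sub_nonneg.2 (hG I I.2)
  rw [hsub] at hnonneg
  linarith

/-- The weak type `(1,1)` estimate for the dyadic maximal operator. -/
theorem IsTree.mul_measureReal_sUnion_le_setIntegral {T : Set (Set X)}
    {C : Set X → Set (Set X)} (hT : IsTree μ T C) {F : Set (Set X)} (hFT : F ⊆ T)
    (hψ : Integrable ψ μ) (hF : ∀ I ∈ F, lam * μ.real I ≤ ∫ x in I, ψ x ∂μ) :
    lam * μ.real (⋃₀ F) ≤ ∫ x in ⋃₀ F, ψ x ∂μ := by
  rw [← hT.sUnion_maximal_eq hFT]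
  exact mul_measureReal_sUnion_le_setIntegral_of_pairwiseDisjoint
    (hT.countable.mono fun J hJ => hFT hJ.prop) (hT.pairwiseDisjoint_maximal hFT)
    (fun J hJ => hT.measurableSet J (hFT hJ.prop)) hψ fun J hJ => hF J hJ.prop

end WeakType

section MaximalOperator

variable {X : Type*} [MeasurableSpace X] {μ : Measure X} {T : Set (Set X)} {φ : X → ℝ}

theorem maxT_nonneg (x : X) : 0 ≤ maxT μ T φ x :=
  Real.sSup_nonneg fun _ ⟨_, _, _, hr⟩ =>
    hr ▸ div_nonneg (integral_nonneg fun _ => abs_nonneg _) ENNReal.toReal_nonneg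

theorem mem_sUnion_of_lt_maxT {lam : ℝ} (hlam : 0 ≤ lam) {x : X} (hx : lam < maxT μ T φ x) :
    x ∈ ⋃₀ {I ∈ T | lam * μ.real I < ∫ u in I, |φ u| ∂μ} := by
  have hne : {r : ℝ | ∃ I ∈ T, x ∈ I ∧ r = (∫ u in I, |φ u| ∂μ) / (μ I).toReal}.Nonempty := by
    by_contra h
    rw [not_nonempty_iff_eq_empty] at h
    rw [maxT, h, Real.sSup_empty] at hx
    exact hx.not_ge hlam
  obtain ⟨_, ⟨I, hI, hxI, rfl⟩, hr⟩ := exists_lt_of_lt_csSup hne hx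
  rw [← measureReal_def] at hr
  have hpos : 0 < μ.real I := by
    refine measureReal_nonneg.lt_of_ne fun h => ?_
    rw [← h, div_zero] at hr
    exact hr.not_ge hlam
  exact ⟨I, ⟨hI, (lt_div_iff₀ hpos).1 hr⟩, hxI⟩

theorem exists_forall_lt_of_lt_decRearr {ψ : X → ℝ} (hψ : BddBelow (range ψ)) {lam t : ℝ}
    (hlam : 0 ≤ lam) (h : lam < decRearr μ ψ t) :
    ∃ e : Set X, μ e = ENNReal.ofReal t ∧ ∀ x ∈ e, lam < ψ x := by
  have hne : {r : ℝ | ∃ e : Set X, μ e = ENNReal.ofReal t ∧ r = sInf (ψ '' e)}.Nonempty := by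
    by_contra hempty
    rw [not_nonempty_iff_eq_empty] at hempty
    rw [decRearr, hempty, Real.sSup_empty] at h
    exact h.not_ge hlam
  obtain ⟨_, ⟨e, he, rfl⟩, hr⟩ := exists_lt_of_lt_csSup hne h
  exact ⟨e, he, fun x hx =>
    hr.trans_le (csInf_le (hψ.mono (image_subset_range ψ e)) (mem_image_of_mem ψ hx))⟩

end MaximalOperator

section Rearrangement

variable {g : ℝ → ℝ}

/-- Superlevel sets of a function decreasing on `(0, b]` are initial segments of `(0, b]`. -/
theorem AntitoneOn.min_volume_le_volume_superlevel {b : ℝ} (hg : AntitoneOn g (Ioc 0 b))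
    (s α : ℝ) :
    min (volume {t ∈ Ioc 0 b | s < g t}) (ENNReal.ofReal α) ≤
      volume {t ∈ Ioc 0 α | s < g t} := by
  by_cases h : ∃ u ∈ Ioc 0 b, s < g u ∧ α < u
  · obtain ⟨u, hu, hsu, hαu⟩ := h
    have hsub : Ioc 0 α ⊆ {t ∈ Ioc 0 α | s < g t} := fun v hv =>
      ⟨hv, hsu.trans_le (hg ⟨hv.1, (hv.2.trans hαu.le).trans hu.2⟩ hu (hv.2.trans hαu.le))⟩
    calc _ ≤ ENNReal.ofReal α := min_le_right _ _
      _ = volume (Ioc 0 α) := by rw [Real.volume_Ioc, sub_zero]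
      _ ≤ _ := measure_mono hsub
  · push Not at h
    exact (min_le_left _ _).trans
      (measure_mono fun v ⟨hv, hsv⟩ => ⟨⟨hv.1, h v hv hsv⟩, hsv⟩)

/-- The running average `(1/t) ∫₀ᵗ g` of a decreasing function is decreasing. -/
theorem AntitoneOn.setIntegral_Ioc_le_mul_average {α t : ℝ} (hg : AntitoneOn g (Ioc 0 α))
    (hgi : IntegrableOn g (Ioc 0 α)) (ht : 0 < t) (htα : t ≤ α) :
    ∫ u in Ioc 0 α, g u ≤ α * ((∫ u in Ioc 0 t, g u) / t) := by
  set A := (∫ u in Ioc 0 t, g u) / t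
  have hA : ∫ u in Ioc 0 t, g u = t * A := (mul_div_cancel₀ _ ht.ne').symm
  have hgA : ∀ u ∈ Ioc t α, g u ≤ A := fun u hu => by
    rw [le_div_iff₀ ht]
    calc g u * t = ∫ _ in Ioc 0 t, g u := by
          rw [setIntegral_const, Real.volume_real_Ioc_of_le ht.le, sub_zero, smul_eq_mul,
            mul_comm]
      _ ≤ ∫ v in Ioc 0 t, g v :=
          setIntegral_mono_on (integrableOn_const measure_Ioc_lt_top.ne)
            (hgi.mono_set (Ioc_subset_Ioc_right htα)) measurableSet_Ioc fun v hv =>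
              hg ⟨hv.1, hv.2.trans htα⟩ ⟨ht.trans hu.1, hu.2⟩ (hv.2.trans hu.1.le)
  calc ∫ u in Ioc 0 α, g u = (∫ u in Ioc 0 t, g u) + ∫ u in Ioc t α, g u := by
        rw [← Ioc_union_Ioc_eq_Ioc ht.le htα]
        exact setIntegral_union (Ioc_disjoint_Ioc_of_le le_rfl) measurableSet_Ioc
          (hgi.mono_set (Ioc_subset_Ioc_right htα)) (hgi.mono_set (Ioc_subset_Ioc_left ht.le))
    _ ≤ t * A + ∫ _ in Ioc t α, A :=
        add_le_add hA.le (setIntegral_mono_on (hgi.mono_set (Ioc_subset_Ioc_left ht.le))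
          (integrableOn_const measure_Ioc_lt_top.ne) measurableSet_Ioc hgA)
    _ = α * A := by
        rw [setIntegral_const, Real.volume_real_Ioc_of_le htα, smul_eq_mul]
        ring

variable {X : Type*} [MeasurableSpace X] {μ : Measure X} [IsProbabilityMeasure μ] {φ : X → ℝ}

/-- The Hardy–Littlewood inequality `∫_U φ ≤ ∫₀^{μ(U)} φ*`, by the layer cake formula. -/
theorem HasRearrangement.setLIntegral_le (hφg : HasRearrangement μ φ g) (hφm : Measurable φ)
    (hφ0 : ∀ x, 0 ≤ φ x) (hg : AntitoneOn g (Ioc 0 1)) (hg0 : ∀ t ∈ Ioc (0 : ℝ) 1, 0 ≤ g t)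
    (hgm : AEMeasurable g (volume.restrict (Ioc 0 1))) {U : Set X} (hU : MeasurableSet U) :
    ∫⁻ x in U, ENNReal.ofReal (φ x) ∂μ ≤
      ∫⁻ t in Ioc 0 (μ.real U), ENNReal.ofReal (g t) := by
  have hα : Ioc 0 (μ.real U) ⊆ Ioc 0 1 := Ioc_subset_Ioc_right measureReal_le_one
  rw [lintegral_eq_lintegral_meas_lt _ (ae_of_all _ hφ0) hφm.aemeasurable,
    lintegral_eq_lintegral_meas_lt _
      ((ae_restrict_iff' measurableSet_Ioc).2 (ae_of_all _ fun t ht => hg0 t (hα ht)))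
      (hgm.mono_measure (Measure.restrict_mono hα le_rfl))]
  refine setLIntegral_mono' measurableSet_Ioi fun s hs => ?_
  rw [Measure.restrict_apply' hU, Measure.restrict_apply' measurableSet_Ioc]
  calc μ ({x | s < φ x} ∩ U)
      ≤ min (μ {x | s < φ x}) (μ U) := le_min (measure_mono inter_subset_left)
        (measure_mono inter_subset_right)
    _ ≤ min (volume {t ∈ Ioc 0 1 | s < g t}) (ENNReal.ofReal (μ.real U)) := by
        rw [ofReal_measureReal, hφg s (le_of_lt hs)]
    _ ≤ volume ({t | s < g t} ∩ Ioc 0 (μ.real U)) := by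
        rw [inter_comm]
        exact hg.min_volume_le_volume_superlevel s _

theorem HasRearrangement.integrable (hφg : HasRearrangement μ φ g) (hφm : Measurable φ)
    (hφ0 : ∀ x, 0 ≤ φ x) (hg : AntitoneOn g (Ioc 0 1)) (hg0 : ∀ t ∈ Ioc (0 : ℝ) 1, 0 ≤ g t)
    (hgi : IntegrableOn g (Ioc 0 1)) : Integrable φ μ := by
  have h := hφg.setLIntegral_le hφm hφ0 hg hg0 hgi.aemeasurable MeasurableSet.univ
  rw [Measure.restrict_univ, probReal_univ] at h
  exact ⟨hφm.aestronglyMeasurable,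
    (hasFiniteIntegral_iff_ofReal (ae_of_all _ hφ0)).2 (h.trans_lt hgi.setLIntegral_lt_top)⟩

theorem HasRearrangement.setIntegral_le (hφg : HasRearrangement μ φ g) (hφm : Measurable φ)
    (hφ0 : ∀ x, 0 ≤ φ x) (hg : AntitoneOn g (Ioc 0 1)) (hg0 : ∀ t ∈ Ioc (0 : ℝ) 1, 0 ≤ g t)
    (hgi : IntegrableOn g (Ioc 0 1)) {U : Set X} (hU : MeasurableSet U) :
    ∫ x in U, φ x ∂μ ≤ ∫ t in Ioc 0 (μ.real U), g t := by
  have hα : Ioc 0 (μ.real U) ⊆ Ioc 0 1 := Ioc_subset_Ioc_right measureReal_le_one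
  have hgU : IntegrableOn g (Ioc 0 (μ.real U)) := hgi.mono_set hα
  rw [integral_eq_lintegral_of_nonneg_ae (ae_of_all _ hφ0) hφm.aestronglyMeasurable.restrict,
    integral_eq_lintegral_of_nonneg_ae
      ((ae_restrict_iff' measurableSet_Ioc).2 (ae_of_all _ fun t ht => hg0 t (hα ht)))
      hgU.aestronglyMeasurable]
  exact ENNReal.toReal_mono hgU.setLIntegral_lt_top.ne
    (hφg.setLIntegral_le hφm hφ0 hg hg0 hgi.aemeasurable hU)

end Rearrangement

theorem statement15_general {X : Type*} [MeasurableSpace X] (μ : Measure X)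
    [IsProbabilityMeasure μ]
    (T : Set (Set X)) (C : Set X → Set (Set X)) (hT : IsTree μ T C)
    (g : ℝ → ℝ) (hg_anti : AntitoneOn g (Set.Ioc 0 1))
    (hg0 : ∀ t ∈ Set.Ioc (0:ℝ) 1, 0 ≤ g t) (hg_int : IntegrableOn g (Set.Ioc 0 1))
    (φ : X → ℝ) (hφm : Measurable φ) (hφ0 : ∀ x, 0 ≤ φ x)
    (hφg : HasRearrangement μ φ g)
    (l : ℝ) :
    volume {t ∈ Set.Ioc (0:ℝ) 1 | l ≤ decRearr μ (maxT μ T φ) t} ≤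
      volume {t ∈ Set.Ioc (0:ℝ) 1 | l ≤ (∫ u in Set.Ioc (0:ℝ) t, g u) / t} := by
  refine measure_mono fun t ⟨ht, hlt⟩ => ⟨ht, ?_⟩
  by_contra! hA
  obtain ⟨lam, hAlam, hlaml⟩ := exists_between hA
  have hlam0 : 0 ≤ lam := (div_nonneg (setIntegral_nonneg measurableSet_Ioc fun u hu =>
    hg0 u ⟨hu.1, hu.2.trans ht.2⟩) ht.1.le).trans hAlam.le
  obtain ⟨e, he, heM⟩ := exists_forall_lt_of_lt_decRearr ⟨0, forall_mem_range.2 maxT_nonneg⟩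
    hlam0 (hlaml.trans_le hlt)
  set F := {I ∈ T | lam * μ.real I < ∫ u in I, |φ u| ∂μ}
  set α := μ.real (⋃₀ F)
  have htα : t ≤ α := by
    have : μ e ≤ μ (⋃₀ F) := measure_mono fun x hx => mem_sUnion_of_lt_maxT hlam0 (heM x hx)
    rwa [he, ← ofReal_measureReal, ENNReal.ofReal_le_ofReal_iff measureReal_nonneg] at this
  have hU : MeasurableSet (⋃₀ F) :=
    .sUnion (hT.countable.mono (sep_subset T _)) fun I hI => hT.measurableSet I hI.1
  have hα1 : Ioc 0 α ⊆ Ioc 0 1 := Ioc_subset_Ioc_right measureReal_le_one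
  have hle : lam * α ≤ α * ((∫ u in Ioc 0 t, g u) / t) :=
    calc lam * α ≤ ∫ x in ⋃₀ F, |φ x| ∂μ :=
          hT.mul_measureReal_sUnion_le_setIntegral (fun I hI => hI.1)
            (hφg.integrable hφm hφ0 hg_anti hg0 hg_int).abs fun I hI => hI.2.le
      _ = ∫ x in ⋃₀ F, φ x ∂μ := by simp only [abs_of_nonneg (hφ0 _)]
      _ ≤ ∫ u in Ioc 0 α, g u := hφg.setIntegral_le hφm hφ0 hg_anti hg0 hg_int hU
      _ ≤ _ := (hg_anti.mono hα1).setIntegral_Ioc_le_mul_average (hg_int.mono_set hα1) ht.1 htα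
  linarith [mul_lt_mul_of_pos_left hAlam (ht.1.trans_le htα)]

/-- comparison of distribution sets of `(M_T φ)*` and of the running average. -/
theorem statement15 {X : Type*} [MeasurableSpace X] (μ : Measure X)
    [IsProbabilityMeasure μ] [NullSingletonClass μ]
    (T : Set (Set X)) (C : Set X → Set (Set X)) (hT : IsTree μ T C)
    (g : ℝ → ℝ) (hg_anti : AntitoneOn g (Set.Ioc 0 1))
    (hg0 : ∀ t ∈ Set.Ioc (0:ℝ) 1, 0 ≤ g t) (hg_int : IntegrableOn g (Set.Ioc 0 1))
    (f : ℝ) (hf : f = ∫ u in Set.Ioc (0:ℝ) 1, g u)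
    (φ : X → ℝ) (hφm : Measurable φ) (hφ0 : ∀ x, 0 ≤ φ x)
    (hφg : HasRearrangement μ φ g)
    (l : ℝ) (hl : f < l) :
    volume {t ∈ Set.Ioc (0:ℝ) 1 | l ≤ decRearr μ (maxT μ T φ) t} ≤
      volume {t ∈ Set.Ioc (0:ℝ) 1 | l ≤ (∫ u in Set.Ioc (0:ℝ) t, g u) / t} :=
  statement15_general μ T C hT g hg_anti hg0 hg_int φ hφm hφ0 hφg l
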